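/- arXiv:1109.0773 — 4 statements merged into one kernel-verified Lean document; each statement's English description precedes it below -/
import Mathlib

section
/- For 0 ≤ x ≤ y one has x^x (1+y)^{1+y} ≥ y^y (1+x)^{1+x}, with the convention 0^0 = 1. Equivalently, the function x ↦ ((1+x)/x)^x (1+x) is monotone nondecreasing on (0,∞). -/
/-!
Taking logarithms, the inequality says that `gap t = (1 + t) log (1 + t) - t log t` is monotone
on `[0, ∞)`; this holds since `gap' t = log (1 + t) - log t > 0`. For `x > 0`,
`((1 + x) / x) ^ x * (1 + x) = (1 + x) ^ (1 + x) / x ^ x`, so the second claim is a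
rearrangement of the first.
-/

open Real Set

namespace SelfPowerGap

noncomputable def gap (t : ℝ) : ℝ := (1 + t) * log (1 + t) - t * log t

theorem hasDerivAt_gap {t : ℝ} (ht : 0 < t) : HasDerivAt gap (log (1 + t) - log t) t := by
  have hshift : HasDerivAt (fun s => (1 + s) * log (1 + s)) ((log (1 + t) + 1) * 1) t :=
    (hasDerivAt_mul_log (by linarith : 1 + t ≠ 0)).comp t ((hasDerivAt_id t).const_add 1)
  exact (hshift.sub (hasDerivAt_mul_log ht.ne')).congr_deriv (by ring)

theorem strictMonoOn_gap : StrictMonoOn gap (Ici 0) := by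
  have hcont : ContinuousOn gap (Ici 0) :=
    ((continuous_mul_log.comp (continuous_const.add continuous_id)).sub
      continuous_mul_log).continuousOn
  refine strictMonoOn_of_deriv_pos (convex_Ici 0) hcont fun t ht => ?_
  rw [interior_Ici, mem_Ioi] at ht
  rw [(hasDerivAt_gap ht).deriv, sub_pos]
  exact log_lt_log ht (by linarith)

end SelfPowerGap

open SelfPowerGap

theorem rpow_self_eq_exp {x : ℝ} (hx : 0 ≤ x) : x ^ x = exp (x * log x) := by
  rcases hx.eq_or_lt with rfl | hx
  · simp
  · rw [rpow_def_of_pos hx, mul_comm]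

theorem rpow_self_mul_one_add_rpow_le {x y : ℝ} (hx : 0 ≤ x) (hxy : x ≤ y) :
    y ^ y * (1 + x) ^ (1 + x) ≤ x ^ x * (1 + y) ^ (1 + y) := by
  have hy : 0 ≤ y := hx.trans hxy
  have hgap := strictMonoOn_gap.monotoneOn (mem_Ici.2 hx) (mem_Ici.2 hy) hxy
  rw [rpow_self_eq_exp hx, rpow_self_eq_exp hy, rpow_self_eq_exp (by linarith : 0 ≤ 1 + x),
    rpow_self_eq_exp (by linarith : 0 ≤ 1 + y), ← exp_add, ← exp_add, exp_le_exp]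
  unfold gap at hgap
  linarith

theorem one_add_div_rpow_mul_one_add {x : ℝ} (hx : 0 < x) :
    ((1 + x) / x) ^ x * (1 + x) = (1 + x) ^ (1 + x) / x ^ x := by
  have h1x : 0 < 1 + x := by linarith
  rw [div_rpow h1x.le hx.le, add_comm 1 x, rpow_add_one (by linarith), div_mul_eq_mul_div]

/-- For `0 ≤ x ≤ y` one has `x^x (1+y)^{1+y} ≥ y^y (1+x)^{1+x}` (real powers, with
`0^0 = 1` as in `Real.rpow`); equivalently `x ↦ ((1+x)/x)^x (1+x)` is monotone
nondecreasing on `(0,∞)`. -/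
theorem stmt_1 :
    (∀ x y : ℝ, 0 ≤ x → x ≤ y →
      y ^ y * (1 + x) ^ (1 + x) ≤ x ^ x * (1 + y) ^ (1 + y)) ∧
    MonotoneOn (fun x : ℝ => ((1 + x) / x) ^ x * (1 + x)) (Set.Ioi (0 : ℝ)) := by
  refine ⟨fun x y hx hxy => rpow_self_mul_one_add_rpow_le hx hxy, ?_⟩
  intro x hx y hy hxy
  rw [mem_Ioi] at hx hy
  simp only [one_add_div_rpow_mul_one_add hx, one_add_div_rpow_mul_one_add hy]
  rw [div_le_div_iff₀ (rpow_pos_of_pos hx x) (rpow_pos_of_pos hy y),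
    mul_comm ((1 + y) ^ (1 + y)), mul_comm ((1 + x) ^ (1 + x))]
  exact rpow_self_mul_one_add_rpow_le hx.le hxy
end

section
/- Let p, m be positive integers and for 0 ≤ k ≤ p define r(k) = (p!/(k!(p-k)!)) · k^k · (m+p-k)^{m+p-k} (with 0^0 = 1). Then for all integers k with 0 ≤ k ≤ p/2, one has r(k) ≥ r(p-k). -/
/-- `r k = (p choose k) * k^k * (m+p-k)^(m+p-k)` (with `0^0 = 1`). -/
def rSeq (p m k : ℕ) : ℕ := Nat.choose p k * k ^ k * (m + p - k) ^ (m + p - k)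

/-!
Since `(p - k) + (m + k) = k + (m + p - k)`, after cancelling `p.choose k` the claim compares
`x ↦ x ^ x` at two pairs of points with the same sum, the first pair lying inside the second.
As `log (x ^ x) = x log x` is convex, moving two points apart with their sum fixed can only
increase the sum of its values there.
-/

open Real

lemma ConvexOn.add_le_add_of_add_eq {I : Set ℝ} {φ : ℝ → ℝ} (hφ : ConvexOn ℝ I φ)
    {a b c d : ℝ} (ha : a ∈ I) (hd : d ∈ I) (hab : a ≤ b) (hac : a ≤ c)
    (hsum : b + c = a + d) : φ b + φ c ≤ φ a + φ d := by
  rcases (show a ≤ d by linarith).eq_or_lt with rfl | had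
  · obtain rfl : b = a := by linarith
    obtain rfl : c = b := by linarith
    rfl
  have hda : 0 < d - a := by linarith
  -- `b` and `c` are the convex combinations of `a, d` with weights `(θ, 1 - θ)` and `(1 - θ, θ)`.
  set θ := (d - b) / (d - a)
  have hθ₀ : 0 ≤ θ := div_nonneg (by linarith) hda.le
  have hθ₁ : 0 ≤ 1 - θ := by
    rw [sub_nonneg, div_le_one hda]; linarith
  have hb : θ • a + (1 - θ) • d = b := by
    simp only [smul_eq_mul, θ]; field_simp; ring
  have hc : (1 - θ) • a + θ • d = c := by
    rw [show c = a + d - b by linarith]; simp only [smul_eq_mul, θ]; field_simp; ring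
  have hφb := hφ.2 ha hd hθ₀ hθ₁ (by ring)
  have hφc := hφ.2 ha hd hθ₁ hθ₀ (by ring)
  rw [hb] at hφb
  rw [hc] at hφc
  simp only [smul_eq_mul] at hφb hφc
  linarith

lemma natCast_pow_self_eq_exp (n : ℕ) : ((n ^ n : ℕ) : ℝ) = exp (n * log n) := by
  rcases n.eq_zero_or_pos with rfl | hn
  · simp
  · rw [← log_pow, exp_log (by positivity), Nat.cast_pow]

lemma pow_self_mul_pow_self_le {a b c d : ℕ} (hab : a ≤ b) (hac : a ≤ c)
    (hsum : b + c = a + d) : b ^ b * c ^ c ≤ a ^ a * d ^ d := by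
  have hconvex := convexOn_mul_log.add_le_add_of_add_eq (Set.mem_Ici.2 (Nat.cast_nonneg a))
    (Set.mem_Ici.2 (Nat.cast_nonneg d)) (Nat.cast_le.2 hab) (Nat.cast_le.2 hac)
    (by exact_mod_cast hsum)
  rw [← Nat.cast_le (α := ℝ), Nat.cast_mul, Nat.cast_mul, natCast_pow_self_eq_exp,
    natCast_pow_self_eq_exp, natCast_pow_self_eq_exp, natCast_pow_self_eq_exp, ← exp_add,
    ← exp_add]
  exact exp_le_exp.2 hconvex

theorem stmt_2_general (p m : ℕ) (k : ℕ) (hk : 2 * k ≤ p) :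
    rSeq p m (p - k) ≤ rSeq p m k := by
  have hcompl : m + p - (p - k) = m + k := by omega
  unfold rSeq
  rw [Nat.choose_symm (by omega), hcompl, mul_assoc, mul_assoc]
  exact Nat.mul_le_mul_left _ (pow_self_mul_pow_self_le (by omega) (by omega) (by omega))

/-- For positive integers `p, m` and `0 ≤ k ≤ p/2`, one has `r(k) ≥ r(p-k)`. -/
theorem stmt_2 (p m : ℕ) (hp : 0 < p) (hm : 0 < m) (k : ℕ) (hk : 2 * k ≤ p) :
    rSeq p m (p - k) ≤ rSeq p m k :=
  stmt_2_general p m k hk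
end

section
/- Let V ∈ C^∞(ℝ), V real-valued, x_0, ξ_0 ∈ ℝ with V'(x_0) > 0, and set z = -ξ_0^2 + iξ_0 + V(x_0). Then there exists δ > 0 and a C^∞ function ψ on (-δ, δ) solving the complex eikonal equation (ψ'(x))^2 - iψ'(x) = V(x_0 + x) - z with ψ(0) = 0, ψ'(0) = ξ_0, and there exists γ > 0 such that γ x^2 ≤ Im ψ(x) ≤ 3γ x^2 for all |x| < δ. -/
open scoped Complex

open Complex Set Filter
open scoped Topology

lemma aux_hasDerivAt_g {w₀ c : ℂ} (hw₀ : w₀ ≠ 0) {W : ℝ → ℂ} {W' : ℂ} (hW : HasDerivAt W W' 0)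
    (h1 : W 0 = w₀) :
    HasDerivAt (fun t => c * Complex.exp (Complex.log (W t / w₀) / 2)) (c * (W' / w₀ / 2)) 0 := by
  have hu : HasDerivAt (fun t => W t / w₀) (W' / w₀) 0 := hW.div_const w₀
  have hu0 : W 0 / w₀ = 1 := by rw [h1, div_self hw₀]
  have hlog : HasDerivAt Complex.log (1 : ℂ) 1 := by
    simpa using Complex.hasDerivAt_log (z := 1) (by simp [Complex.mem_slitPlane_iff])
  have h2 : HasDerivAt (fun t => Complex.log (W t / w₀)) (W' / w₀) 0 := by
    have := (hlog.complexToReal_fderiv (x := 1)).comp_hasDerivAt_of_eq 0 hu hu0.symm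
    simpa [Function.comp_def] using this
  have h3 : HasDerivAt (fun t => Complex.log (W t / w₀) / 2) (W' / w₀ / 2) 0 := h2.div_const 2
  have hexp : HasDerivAt Complex.exp (1 : ℂ) 0 := by simpa using Complex.hasDerivAt_exp 0
  have h0 : Complex.log (W 0 / w₀) / 2 = 0 := by rw [hu0, Complex.log_one]; ring
  have h4 : HasDerivAt (fun t => Complex.exp (Complex.log (W t / w₀) / 2)) (W' / w₀ / 2) 0 := by
    have := (hexp.complexToReal_fderiv (x := 0)).comp_hasDerivAt_of_eq 0 h3 h0.symm
    simpa [Function.comp_def] using this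
  exact h4.const_mul c

/-- Solution of the complex eikonal equation `(ψ')^2 - iψ' = V(x_0 + ·) - z` with
`ψ(0)=0`, `ψ'(0)=ξ_0`, where `z = -ξ_0^2 + iξ_0 + V(x_0)` and `V'(x_0) > 0`; moreover
`Im ψ` is comparable to `γ x^2` near `0`. -/
theorem stmt_9 (V : ℝ → ℝ) (hV : ContDiff ℝ (⊤ : ℕ∞) V) (x₀ ξ₀ : ℝ)
    (hV' : 0 < deriv V x₀) (z : ℂ)
    (hz : z = -(ξ₀ : ℂ) ^ 2 + Complex.I * ξ₀ + (V x₀ : ℂ)) :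
    ∃ δ > 0, ∃ ψ : ℝ → ℂ,
      ContDiffOn ℝ (⊤ : ℕ∞) ψ (Set.Ioo (-δ) δ) ∧
      ψ 0 = 0 ∧ deriv ψ 0 = (ξ₀ : ℂ) ∧
      (∀ x ∈ Set.Ioo (-δ) δ,
        (deriv ψ x) ^ 2 - Complex.I * deriv ψ x = (V (x₀ + x) : ℂ) - z) ∧
      ∃ γ > 0, ∀ x ∈ Set.Ioo (-δ) δ,
        γ * x ^ 2 ≤ (ψ x).im ∧ (ψ x).im ≤ 3 * γ * x ^ 2 := by
  set c : ℂ := (ξ₀ : ℂ) - Complex.I / 2 with hc_def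
  have hcim : c.im = -(1/2) := by simp [hc_def]
  have hc : c ≠ 0 := fun h => by simpa [h] using hcim
  set w₀ : ℂ := c ^ 2 with hw₀_def
  have hw₀ : w₀ ≠ 0 := pow_ne_zero _ hc
  set W : ℝ → ℂ := fun t => ((V (x₀ + t) - V x₀ : ℝ) : ℂ) + w₀ with hW_def
  have hW0 : W 0 = w₀ := by simp [hW_def]
  have hWsm : ContDiff ℝ (⊤ : ℕ∞) W := by
    apply ContDiff.add _ contDiff_const
    exact Complex.ofRealCLM.contDiff.comp
      ((hV.comp (contDiff_const.add contDiff_id)).sub contDiff_const)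
  set g : ℝ → ℂ := fun t => c * Complex.exp (Complex.log (W t / w₀) / 2) with hg_def
  -- continuity region
  have hWcont : ContinuousAt (fun t => W t / w₀) 0 :=
    (hWsm.continuous.continuousAt).div_const w₀
  obtain ⟨δ₁, hδ₁pos, hδ₁⟩ : ∃ δ₁ > 0, ∀ t : ℝ, |t| < δ₁ → ‖W t / w₀ - 1‖ < 1/2 := by
    have h2 : ∀ᶠ t in nhds (0:ℝ), ‖W t / w₀ - 1‖ < 1/2 := by
      have : ContinuousAt (fun t => ‖W t / w₀ - 1‖) 0 := (hWcont.sub continuousAt_const).norm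
      have h0 : ‖W 0 / w₀ - 1‖ = 0 := by rw [hW0, div_self hw₀]; simp
      apply this.eventually_lt continuousAt_const
      rw [h0]; norm_num
    rw [Metric.eventually_nhds_iff] at h2
    obtain ⟨ε, hε, hh⟩ := h2
    exact ⟨ε, hε, fun t ht => hh (by simpa [Real.dist_eq] using ht)⟩
  have hslit : ∀ t : ℝ, |t| < δ₁ → W t / w₀ ∈ Complex.slitPlane := by
    intro t ht
    rw [Complex.mem_slitPlane_iff]
    left
    have h1 := hδ₁ t ht
    have h2 : |(W t / w₀ - 1).re| ≤ ‖W t / w₀ - 1‖ := Complex.abs_re_le_norm _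
    have h3 : (W t / w₀ - 1).re = (W t / w₀).re - 1 := by simp
    rw [h3] at h2
    have := abs_le.mp (h2.trans h1.le)
    linarith [this.1]
  have hWne : ∀ t : ℝ, |t| < δ₁ → W t / w₀ ≠ 0 := by
    intro t ht h
    have := hδ₁ t ht
    rw [h] at this
    norm_num at this
  -- g is smooth on the region
  have hgsm : ∀ t : ℝ, |t| < δ₁ → ContDiffAt ℝ (⊤ : ℕ∞) g t := fun t ht => by
    have hlog : ContDiffAt ℝ (⊤ : ℕ∞) (fun s => Complex.log (W s / w₀)) t := by
      have := ((Complex.contDiffAt_log (n := ((⊤ : ℕ∞) : WithTop ℕ∞)) (hslit t ht)).restrict_scalars ℝ).comp t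
        (hWsm.contDiffAt.div_const w₀)
      exact this
    exact contDiffAt_const.mul (hlog.div_const 2).cexp
  have hgcont : ContinuousOn g (Ioo (-δ₁) δ₁) := fun t ht =>
    ((hgsm t (abs_lt.mpr ⟨ht.1, ht.2⟩)).continuousAt).continuousWithinAt
  have hg0 : g 0 = c := by
    simp [hg_def, hW0, div_self hw₀, Complex.log_one]
  have hgsq : ∀ t : ℝ, |t| < δ₁ → g t ^ 2 = W t := by
    intro t ht
    have h1 : Complex.exp (Complex.log (W t / w₀) / 2) ^ 2 = W t / w₀ := by
      rw [sq, ← Complex.exp_add]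
      rw [show Complex.log (W t / w₀) / 2 + Complex.log (W t / w₀) / 2
        = Complex.log (W t / w₀) by ring]
      exact Complex.exp_log (hWne t ht)
    calc g t ^ 2 = c ^ 2 * Complex.exp (Complex.log (W t / w₀) / 2) ^ 2 := by
          rw [hg_def]; ring
      _ = w₀ * (W t / w₀) := by rw [h1, hw₀_def]
      _ = W t := by field_simp
  -- derivative of g at 0
  have hVd : HasDerivAt (fun t : ℝ => V (x₀ + t)) (deriv V x₀) 0 := by
    have h1 : HasDerivAt V (deriv V x₀) (x₀ + 0) := by
      rw [add_zero]
      exact (hV.differentiable (by simp) x₀).hasDerivAt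
    have h2 : HasDerivAt (fun t : ℝ => x₀ + t) 1 0 := (hasDerivAt_id 0).const_add x₀
    simpa [Function.comp_def] using h1.comp 0 h2
  have hWd : HasDerivAt W ((deriv V x₀ : ℝ) : ℂ) 0 := by
    have := ((hVd.sub_const (V x₀)).ofReal_comp (z := 0)).add_const w₀
    exact this
  have hgd : HasDerivAt g (c * (((deriv V x₀ : ℝ) : ℂ) / w₀ / 2)) 0 :=
    aux_hasDerivAt_g hw₀ hWd hW0
  -- the constant a > 0
  set a : ℝ := (c * (((deriv V x₀ : ℝ) : ℂ) / w₀ / 2)).im with ha_def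
  have ha : 0 < a := by
    have h1 : c * (((deriv V x₀ : ℝ) : ℂ) / w₀ / 2) = ((deriv V x₀ : ℝ) : ℂ) * (2 * c)⁻¹ := by
      rw [hw₀_def]; field_simp
    have h2 : ((2 : ℂ) * c)⁻¹.im = -(2*c).im / Complex.normSq (2*c) := Complex.inv_im _
    have h3 : (2*c : ℂ).im = -1 := by simp [Complex.mul_im, hcim]
    have h4 : 0 < Complex.normSq (2*c) := Complex.normSq_pos.mpr (by simp [hc])
    rw [ha_def, h1, Complex.mul_im, h2, h3]
    simp only [Complex.ofReal_re, Complex.ofReal_im]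
    have : (0:ℝ) < deriv V x₀ * (-(-1) / Complex.normSq (2*c)) := by positivity
    linarith
  -- little-o estimate for h t = 1/2 + (g t).im
  set h : ℝ → ℝ := fun t => 1/2 + (g t).im with hh_def
  have hh0 : h 0 = 0 := by simp [hh_def, hg0, hcim]
  have hhd : HasDerivAt h a 0 := by
    have := (Complex.imCLM.hasFDerivAt.comp_hasDerivAt 0 hgd).const_add (1/2 : ℝ)
    simpa [hh_def, ha_def] using this
  obtain ⟨δ₂, hδ₂pos, hδ₂⟩ : ∃ δ₂ > 0, ∀ t : ℝ, |t| < δ₂ → |h t - a * t| ≤ a/4 * |t| := by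
    rw [hasDerivAt_iff_isLittleO] at hhd
    have hb2 := hhd.bound (by positivity : (0:ℝ) < a/4)
    rw [Metric.eventually_nhds_iff] at hb2
    obtain ⟨ε, hε, hb⟩ := hb2
    refine ⟨ε, hε, fun t ht => ?_⟩
    have := hb (y := t) (by simpa [Real.dist_eq] using ht)
    simpa [hh0, Real.norm_eq_abs, smul_eq_mul, mul_comm] using this
  set δ : ℝ := min δ₁ δ₂ with hδ_def
  have hδpos : 0 < δ := lt_min hδ₁pos hδ₂pos
  have hmem₁ : ∀ x : ℝ, x ∈ Ioo (-δ) δ → |x| < δ₁ :=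
    fun x hx => lt_of_lt_of_le (abs_lt.mpr ⟨hx.1, hx.2⟩) (min_le_left _ _)
  have hmem₂ : ∀ x : ℝ, x ∈ Ioo (-δ) δ → |x| < δ₂ :=
    fun x hx => lt_of_lt_of_le (abs_lt.mpr ⟨hx.1, hx.2⟩) (min_le_right _ _)
  set ψ : ℝ → ℂ := fun x => Complex.I/2 * (x : ℂ) + ∫ t in (0:ℝ)..x, g t with hψ_def
  have hsub : ∀ x : ℝ, |x| < δ₁ → uIcc (0:ℝ) x ⊆ Ioo (-δ₁) δ₁ := by
    intro x hx
    apply (Set.ordConnected_Ioo).uIcc_subset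
    · exact ⟨by linarith [hδ₁pos], hδ₁pos⟩
    · exact ⟨(abs_lt.mp hx).1, (abs_lt.mp hx).2⟩
  have hInt : ∀ x : ℝ, |x| < δ₁ → IntervalIntegrable g MeasureTheory.volume 0 x :=
    fun x hx => (hgcont.mono (hsub x hx)).intervalIntegrable
  have hψd : ∀ x : ℝ, |x| < δ₁ → HasDerivAt ψ (Complex.I/2 + g x) x := by
    intro x hx
    have hl : HasDerivAt (fun x : ℝ => Complex.I/2 * (x:ℂ)) (Complex.I/2) x := by
      simpa using (Complex.ofRealCLM.hasDerivAt (x := x)).const_mul (Complex.I/2)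
    have h2 : HasDerivAt (fun y => ∫ t in (0:ℝ)..y, g t) (g x) x := by
      apply intervalIntegral.integral_hasDerivAt_right (hInt x hx)
      · exact hgcont.stronglyMeasurableAtFilter isOpen_Ioo x ⟨(abs_lt.mp hx).1, (abs_lt.mp hx).2⟩
      · exact (hgsm x hx).continuousAt
    exact hl.add h2
  have hψ0 : ψ 0 = 0 := by simp [hψ_def]
  have hψd0 : deriv ψ 0 = (ξ₀ : ℂ) := by
    rw [(hψd 0 (by simpa using hδ₁pos)).deriv, hg0, hc_def]; ring
  refine ⟨δ, hδpos, ψ, ?_, hψ0, hψd0, ?_, a/4, by positivity, ?_⟩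
  · -- smoothness (in fact analyticity)
    rw [contDiffOn_infty_iff_deriv_of_isOpen isOpen_Ioo]
    refine ⟨fun x hx => (hψd x (hmem₁ x hx)).differentiableAt.differentiableWithinAt, ?_⟩
    have hg' : ContDiffOn ℝ (⊤ : ℕ∞) (fun y => Complex.I/2 + g y) (Ioo (-δ) δ) :=
      fun x hx => (contDiffAt_const.add (hgsm x (hmem₁ x hx))).contDiffWithinAt
    exact hg'.congr (fun x hx => (hψd x (hmem₁ x hx)).deriv)
  · -- eikonal equation
    intro x hx
    rw [(hψd x (hmem₁ x hx)).deriv]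
    have hsq := hgsq x (hmem₁ x hx)
    rw [hW_def] at hsq
    simp only [hw₀_def, hc_def] at hsq
    push_cast at hsq
    rw [hz]
    push_cast
    linear_combination hsq
  · -- Im estimates
    intro x hx
    have hx1 := hmem₁ x hx
    have hx2 := hmem₂ x hx
    have hintg : IntervalIntegrable (fun t => (g t).im) MeasureTheory.volume 0 x :=
      ((Complex.continuous_im.comp_continuousOn (hgcont.mono (hsub x hx1)))).intervalIntegrable
    have him : (ψ x).im = x/2 + ∫ t in (0:ℝ)..x, (g t).im := by
      rw [hψ_def]
      have h1 : (Complex.I/2 * (x:ℂ)).im = x/2 := by simp; ring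
      have h2 : (∫ t in (0:ℝ)..x, g t).im = ∫ t in (0:ℝ)..x, (g t).im := by
        have := Complex.imCLM.intervalIntegral_comp_comm (hInt x hx1)
        simpa using this.symm
      rw [Complex.add_im, h1, h2]
    have hinth : IntervalIntegrable h MeasureTheory.volume 0 x := by
      rw [hh_def]
      exact intervalIntegrable_const.add hintg
    have hintat : IntervalIntegrable (fun t => a * t) MeasureTheory.volume 0 x :=
      (continuous_const.mul continuous_id).intervalIntegrable _ _
    have key : (ψ x).im - a/2 * x^2 = ∫ t in (0:ℝ)..x, (h t - a * t) := by
      rw [intervalIntegral.integral_sub hinth hintat]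
      have e1 : (∫ t in (0:ℝ)..x, h t) = x/2 + ∫ t in (0:ℝ)..x, (g t).im := by
        rw [hh_def]
        rw [intervalIntegral.integral_add intervalIntegrable_const hintg]
        simp [intervalIntegral.integral_const]
        ring
      have e2 : (∫ t in (0:ℝ)..x, a * t) = a/2 * x^2 := by
        rw [intervalIntegral.integral_const_mul, integral_id]
        ring
      rw [e1, e2, him]
    have hbound : |∫ t in (0:ℝ)..x, (h t - a * t)| ≤ a/4 * |x| * |x - 0| := by
      have := intervalIntegral.norm_integral_le_of_norm_le_const
        (f := fun t => h t - a * t) (a := (0:ℝ)) (b := x) (C := a/4 * |x|) ?_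
      · simpa [Real.norm_eq_abs] using this
      · intro t ht
        have htx : |t| ≤ |x| := by
          rcases Set.mem_uIoc.mp ht with h' | h'
          · rw [abs_of_pos h'.1]
            exact h'.2.trans (le_abs_self x)
          · rw [abs_of_nonpos h'.2]
            calc -t ≤ -x := by linarith [h'.1]
              _ ≤ |x| := neg_le_abs x
        have ht2 : |t| < δ₂ := lt_of_le_of_lt htx hx2
        calc ‖h t - a * t‖ = |h t - a * t| := rfl
          _ ≤ a/4 * |t| := hδ₂ t ht2
          _ ≤ a/4 * |x| := by nlinarith
    have habs : |(ψ x).im - a/2 * x^2| ≤ a/4 * x^2 := by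
      rw [key]
      calc |∫ t in (0:ℝ)..x, (h t - a * t)| ≤ a/4 * |x| * |x - 0| := hbound
        _ = a/4 * x^2 := by rw [sub_zero, sq]; rw [mul_assoc, abs_mul_abs_self]
    have := abs_le.mp habs
    constructor <;> nlinarith [this.1, this.2]
end

section
/- Let v_1 be the positive ground state Dirichlet eigenfunction of -Δ on the unit ball B(0,1) ⊂ ℝ^d with eigenvalue λ > 0, extended smoothly. Let χ ∈ C^∞ with 0 ≤ χ ≤ 1, χ ≡ 1 on B(0,1)\B(0,1-ε), supp χ ⊂ B(0,1)\B(0,1-2ε). Then for ε > 0 small enough there exist M > 0 and β > 0 such that v_2 := M v_1 + χ(x)(|x|^2 - 1) satisfies v_2 > 0 on B(0,1) and -Δv_2 ≤ 2λ v_2 - β on B(0,1). -/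
/-- Laplacian `Δ f = Σ_j ∂_j^2 f` of a real-valued function on `ℝ^d`. -/
noncomputable def lapR {d : ℕ} (f : EuclideanSpace ℝ (Fin d) → ℝ)
    (x : EuclideanSpace ℝ (Fin d)) : ℝ :=
  ∑ j : Fin d, fderiv ℝ (fun y => fderiv ℝ f y (EuclideanSpace.single j 1)) x
    (EuclideanSpace.single j 1)

open scoped RealInnerProductSpace

variable {d : ℕ}

/-- directional derivative function smooth -/
lemma d1_contDiff {f : EuclideanSpace ℝ (Fin d) → ℝ} (hf : ContDiff ℝ (⊤ : ℕ∞) f)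
    (v : EuclideanSpace ℝ (Fin d)) :
    ContDiff ℝ (⊤ : ℕ∞) (fun y => fderiv ℝ f y v) :=
  (ContinuousLinearMap.apply ℝ ℝ v).contDiff.comp (hf.fderiv_right (by simp))

lemma lapR_continuous {f : EuclideanSpace ℝ (Fin d) → ℝ} (hf : ContDiff ℝ (⊤ : ℕ∞) f) :
    Continuous (lapR f) := by
  refine continuous_finset_sum _ fun j _ => ?_
  exact (d1_contDiff (d1_contDiff hf _) _).continuous

lemma lapR_smul_add {f g : EuclideanSpace ℝ (Fin d) → ℝ} (hf : ContDiff ℝ (⊤ : ℕ∞) f)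
    (hg : ContDiff ℝ (⊤ : ℕ∞) g) (a : ℝ) (x : EuclideanSpace ℝ (Fin d)) :
    lapR (fun y => a * f y + g y) x = a * lapR f x + lapR g x := by
  unfold lapR
  rw [Finset.mul_sum, ← Finset.sum_add_distrib]
  refine Finset.sum_congr rfl fun j _ => ?_
  set v := EuclideanSpace.single (𝕜 := ℝ) j (1:ℝ)
  have h1 : (fun y => fderiv ℝ (fun z => a * f z + g z) y v)
      = fun y => a * fderiv ℝ f y v + fderiv ℝ g y v := by
    funext y
    rw [fderiv_fun_add ((hf.differentiable (by simp) y).const_mul a) (hg.differentiable (by simp) y),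
      fderiv_const_mul (hf.differentiable (by simp) y)]
    simp
  rw [h1, fderiv_fun_add (((d1_contDiff hf v).differentiable (by simp) x).const_mul a)
    ((d1_contDiff hg v).differentiable (by simp) x),
    fderiv_const_mul ((d1_contDiff hf v).differentiable (by simp) x)]
  simp

lemma lapR_congr {f g : EuclideanSpace ℝ (Fin d) → ℝ} {x : EuclideanSpace ℝ (Fin d)}
    (h : f =ᶠ[nhds x] g) : lapR f x = lapR g x := by
  unfold lapR
  refine Finset.sum_congr rfl fun j _ => ?_
  have h1 : (fun y => fderiv ℝ f y (EuclideanSpace.single j 1))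
      =ᶠ[nhds x] (fun y => fderiv ℝ g y (EuclideanSpace.single j 1)) := by
    filter_upwards [h.eventuallyEq_nhds] with y hy
    rw [hy.fderiv_eq]
  rw [h1.fderiv_eq]

lemma fderiv_normsq (x : EuclideanSpace ℝ (Fin d)) :
    fderiv ℝ (fun y : EuclideanSpace ℝ (Fin d) => ‖y‖ ^ 2) x = 2 • (innerSL ℝ x) :=
  (hasStrictFDerivAt_norm_sq x).hasFDerivAt.fderiv

lemma inner_single (x : EuclideanSpace ℝ (Fin d)) (j : Fin d) :
    ⟪x, EuclideanSpace.single j (1:ℝ)⟫ = x j := by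
  rw [EuclideanSpace.inner_single_right]; simp

lemma normsq_eq_sum (x : EuclideanSpace ℝ (Fin d)) : ‖x‖ ^ 2 = ∑ j, x j ^ 2 := by
  rw [← real_inner_self_eq_norm_sq]
  rw [PiLp.inner_apply]; simp [sq]

lemma lapR_normsq (x : EuclideanSpace ℝ (Fin d)) :
    lapR (fun y => ‖y‖ ^ 2) x = 2 * d := by
  unfold lapR
  have h1 : ∀ j : Fin d, (fun y : EuclideanSpace ℝ (Fin d) =>
      fderiv ℝ (fun z => ‖z‖ ^ 2) y (EuclideanSpace.single j 1))
      = fun y => 2 * (innerSL ℝ (EuclideanSpace.single j (1:ℝ))) y := by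
    intro j; funext y
    rw [fderiv_normsq]
    simp [real_inner_comm, two_smul]; ring
  have h2 : ∀ j : Fin d,
      fderiv ℝ (fun y : EuclideanSpace ℝ (Fin d) =>
        fderiv ℝ (fun z => ‖z‖ ^ 2) y (EuclideanSpace.single j 1)) x
        (EuclideanSpace.single j 1) = 2 := by
    intro j
    rw [h1 j, fderiv_const_mul ((innerSL ℝ _).differentiableAt),
      ContinuousLinearMap.fderiv]
    have : ⟪EuclideanSpace.single j (1:ℝ), EuclideanSpace.single j (1:ℝ)⟫ = 1 := by
      rw [inner_single]; simp
    simp [this]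
  simp only [h2, Finset.sum_const, Finset.card_univ, Fintype.card_fin, nsmul_eq_mul]; ring

lemma hasFDerivAt_bar (a : ℝ) (x : EuclideanSpace ℝ (Fin d)) :
    HasFDerivAt (fun y : EuclideanSpace ℝ (Fin d) => Real.exp (-a * ‖y‖ ^ 2))
      (Real.exp (-a * ‖x‖ ^ 2) • ((-a) • (2 • (innerSL ℝ x)))) x :=
  ((hasStrictFDerivAt_norm_sq x).hasFDerivAt.const_mul (-a)).exp

lemma d1_bar (a : ℝ) (v : EuclideanSpace ℝ (Fin d)) :
    (fun y => fderiv ℝ (fun z : EuclideanSpace ℝ (Fin d) => Real.exp (-a * ‖z‖ ^ 2)) y v)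
      = fun y => Real.exp (-a * ‖y‖ ^ 2) * (-2 * a * ⟪y, v⟫) := by
  funext y
  rw [(hasFDerivAt_bar a y).fderiv]
  simp [two_smul]; ring

lemma lapR_bar (a : ℝ) (x : EuclideanSpace ℝ (Fin d)) :
    lapR (fun y => Real.exp (-a * ‖y‖ ^ 2)) x
      = Real.exp (-a * ‖x‖ ^ 2) * (4 * a ^ 2 * ‖x‖ ^ 2 - 2 * a * d) := by
  unfold lapR
  have key : ∀ j : Fin d,
      fderiv ℝ (fun y : EuclideanSpace ℝ (Fin d) =>
        fderiv ℝ (fun z => Real.exp (-a * ‖z‖ ^ 2)) y (EuclideanSpace.single j 1)) x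
        (EuclideanSpace.single j 1)
      = Real.exp (-a * ‖x‖ ^ 2) * (4 * a ^ 2 * (x j) ^ 2 - 2 * a) := by
    intro j
    set v := EuclideanSpace.single (𝕜 := ℝ) j (1:ℝ) with hv
    rw [d1_bar a v]
    have h1 : (fun y : EuclideanSpace ℝ (Fin d) => Real.exp (-a * ‖y‖ ^ 2) * (-2 * a * ⟪y, v⟫))
        = fun y => Real.exp (-a * ‖y‖ ^ 2) * ((-2 * a) * (innerSL ℝ v) y) := by
      funext y; rw [real_inner_comm]; rfl
    have hL : HasFDerivAt (fun y : EuclideanSpace ℝ (Fin d) => (-2 * a) * (innerSL ℝ v) y)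
        ((-2 * a) • (innerSL ℝ v)) x := ((innerSL ℝ v).hasFDerivAt).const_mul _
    have hprod := (hasFDerivAt_bar a x).mul hL
    rw [h1, show (fun y : EuclideanSpace ℝ (Fin d) => Real.exp (-a * ‖y‖ ^ 2) * ((-2 * a) * (innerSL ℝ v) y)) = (fun y => Real.exp (-a * ‖y‖ ^ 2)) * (fun y => (-2 * a) * (innerSL ℝ v) y) from rfl, hprod.fderiv]
    have e1 : ⟪x, v⟫ = x j := inner_single x j
    have e2 : ⟪v, v⟫ = (1:ℝ) := by rw [inner_single]; simp [hv]
    have e3 : (innerSL ℝ v) x = x j := by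
      show ⟪v, x⟫ = x j; rw [real_inner_comm]; exact e1
    have e4 : (innerSL ℝ v) v = (1:ℝ) := e2
    have e5 : (innerSL ℝ x) v = x j := e1
    simp only [ContinuousLinearMap.add_apply, ContinuousLinearMap.smul_apply, smul_eq_mul,
      e3, e4, e5, two_smul, ContinuousLinearMap.coe_smul', Pi.smul_apply]
    ring
  rw [Finset.sum_congr rfl fun j _ => key j, ← Finset.mul_sum, normsq_eq_sum]
  rw [Finset.sum_sub_distrib, ← Finset.mul_sum, Finset.sum_const, Finset.card_univ,
    Fintype.card_fin, nsmul_eq_mul]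
  ring

lemma line_hasDerivAt {F : EuclideanSpace ℝ (Fin d) → ℝ} (hF : ContDiff ℝ (⊤ : ℕ∞) F)
    (x v : EuclideanSpace ℝ (Fin d)) (t : ℝ) :
    HasDerivAt (fun s : ℝ => F (x + s • v)) (fderiv ℝ F (x + t • v) v) t := by
  have hl : HasDerivAt (fun s : ℝ => x + s • v) v t := by
    simpa using ((hasDerivAt_id t).smul_const v).const_add x
  exact ((hF.differentiable (by simp) _).hasFDerivAt).comp_hasDerivAt t hl

lemma second_deriv_nonneg_of_isLocalMin {g g' : ℝ → ℝ} {G2 : ℝ}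
    (hg : ∀ t, HasDerivAt g (g' t) t) (hg' : HasDerivAt g' G2 0)
    (hmin : IsLocalMin g 0) : 0 ≤ G2 := by
  by_contra hneg
  push_neg at hneg
  have h0 : g' 0 = 0 := by
    have := hmin.deriv_eq_zero
    rwa [(hg 0).deriv] at this
  have hslope : Filter.Tendsto (slope g' 0) (nhdsWithin 0 {(0:ℝ)}ᶜ) (nhds G2) :=
    hasDerivAt_iff_tendsto_slope.mp hg'
  have hev : ∀ᶠ t in nhdsWithin 0 {(0:ℝ)}ᶜ, slope g' 0 t < G2 / 2 :=
    hslope.eventually (eventually_lt_nhds (by linarith))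
  obtain ⟨δ, hδ, hev⟩ := Metric.mem_nhdsWithin_iff.mp hev
  obtain ⟨δ₂, hδ₂, hmin2⟩ := Metric.eventually_nhds_iff.mp hmin
  set r : ℝ := min δ δ₂ / 2 with hr
  have hrpos : 0 < r := by positivity
  have hder_neg : ∀ t ∈ Set.Ioo (0:ℝ) r, deriv g t < 0 := by
    intro t ht
    have ht0 : t ≠ 0 := ne_of_gt ht.1
    have htδ : dist t 0 < δ := by
      rw [Real.dist_eq, sub_zero, abs_of_pos ht.1]
      have : r < δ := by
        rw [hr]; have := min_le_left δ δ₂; linarith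
      linarith [ht.2]
    have h5 : slope g' 0 t < G2 / 2 := hev ⟨Metric.mem_ball.mpr htδ, ht0⟩
    rw [slope_def_field, h0, sub_zero, sub_zero, div_lt_iff₀ ht.1] at h5
    rw [(hg t).deriv]
    nlinarith [ht.1]

  have hanti : StrictAntiOn g (Set.Icc 0 r) := by
    refine strictAntiOn_of_deriv_neg (convex_Icc 0 r) ?_ ?_
    · exact Continuous.continuousOn (by
        have : Differentiable ℝ g := fun t => (hg t).differentiableAt
        exact this.continuous)
    · intro t ht
      rw [interior_Icc] at ht
      exact hder_neg t ht
  have h1 : g r < g 0 := hanti (Set.left_mem_Icc.mpr hrpos.le) (Set.right_mem_Icc.mpr hrpos.le) hrpos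
  have h2 : g 0 ≤ g r := by
    refine hmin2 ?_
    rw [Real.dist_eq, sub_zero, abs_of_pos hrpos]
    have := min_le_right δ δ₂; rw [hr]; linarith
  linarith

lemma lapR_nonneg_of_isLocalMin {f : EuclideanSpace ℝ (Fin d) → ℝ} (hf : ContDiff ℝ (⊤ : ℕ∞) f)
    {x : EuclideanSpace ℝ (Fin d)} (h : IsLocalMin f x) : 0 ≤ lapR f x := by
  unfold lapR
  refine Finset.sum_nonneg fun j _ => ?_
  set v := EuclideanSpace.single (𝕜 := ℝ) j (1:ℝ)
  have hg : ∀ t : ℝ, HasDerivAt (fun s : ℝ => f (x + s • v)) (fderiv ℝ f (x + t • v) v) t :=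
    line_hasDerivAt hf x v
  have hg' : HasDerivAt (fun t : ℝ => fderiv ℝ f (x + t • v) v)
      (fderiv ℝ (fun y => fderiv ℝ f y v) x v) 0 := by
    have := line_hasDerivAt (d1_contDiff hf v) x v 0
    simpa using this
  refine second_deriv_nonneg_of_isLocalMin hg hg' ?_
  have hcont : ContinuousAt (fun s : ℝ => x + s • v) 0 := by fun_prop
  have : IsLocalMin (f ∘ fun s : ℝ => x + s • v) 0 := by
    refine IsLocalMin.comp_continuous ?_ hcont
    simpa using h
  exact this

lemma min_principle (hd : 0 < d) {u : EuclideanSpace ℝ (Fin d) → ℝ} (hu : ContDiff ℝ (⊤ : ℕ∞) u)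
    {U : Set (EuclideanSpace ℝ (Fin d))}
    (hUopen : IsOpen U) (hUsub : U ⊆ Metric.closedBall 0 1)
    (hlap : ∀ x ∈ U, lapR u x ≤ 0)
    (hbd : ∀ x ∈ closure U \ U, 0 ≤ u x) :
    ∀ x ∈ U, 0 ≤ u x := by
  intro x hx
  have key : ∀ η : ℝ, 0 < η → -η ≤ u x := by
    intro η hη
    set w : EuclideanSpace ℝ (Fin d) → ℝ := fun y => (-η) * ‖y‖ ^ 2 + u y with hw
    have hwc : ContDiff ℝ (⊤ : ℕ∞) w := ((contDiff_norm_sq ℝ).const_smul (-η)).add hu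
    have hclsub : closure U ⊆ Metric.closedBall 0 1 :=
      closure_minimal hUsub Metric.isClosed_closedBall
    have hcomp : IsCompact (closure U) :=
      (isCompact_closedBall (0 : EuclideanSpace ℝ (Fin d)) 1).of_isClosed_subset
        isClosed_closure hclsub
    obtain ⟨x₀, hx₀, hmin⟩ := hcomp.exists_isMinOn ⟨x, subset_closure hx⟩
      hwc.continuous.continuousOn
    have hx₀notU : x₀ ∉ U := by
      intro hx₀U
      have hloc : IsLocalMin w x₀ :=
        hmin.isLocalMin (Filter.mem_of_superset (hUopen.mem_nhds hx₀U) subset_closure)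
      have h1 : 0 ≤ lapR w x₀ := lapR_nonneg_of_isLocalMin hwc hloc
      have h2 : lapR w x₀ = (-η) * (2 * d) + lapR u x₀ := by
        rw [hw]
        rw [lapR_smul_add (contDiff_norm_sq ℝ) hu (-η) x₀, lapR_normsq]
      have h3 : lapR u x₀ ≤ 0 := hlap x₀ hx₀U
      have hd1 : (1:ℝ) ≤ d := by exact_mod_cast hd
      nlinarith
    have hwx₀ : -η ≤ w x₀ := by
      have h1 : 0 ≤ u x₀ := hbd x₀ ⟨hx₀, hx₀notU⟩
      have h2 : ‖x₀‖ ≤ 1 := by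
        have := Metric.mem_closedBall.mp (hclsub hx₀)
        rwa [dist_zero_right] at this
      have : ‖x₀‖ ^ 2 ≤ 1 := by nlinarith [norm_nonneg x₀]
      simp only [hw]; nlinarith
    have h6 : w x₀ ≤ w x := hmin (subset_closure hx)
    simp only [hw] at h6 hwx₀
    nlinarith [sq_nonneg ‖x‖]
  by_contra hlt
  push_neg at hlt
  have := key (-u x / 2) (by linarith)
  linarith

lemma lapR_sub_const {f : EuclideanSpace ℝ (Fin d) → ℝ} (C : ℝ)
    (x : EuclideanSpace ℝ (Fin d)) : lapR (fun y => f y - C) x = lapR f x := by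
  unfold lapR
  refine Finset.sum_congr rfl fun j _ => ?_
  have : (fun y : EuclideanSpace ℝ (Fin d) => fderiv ℝ (fun z => f z - C) y
      (EuclideanSpace.single j 1)) = fun y => fderiv ℝ f y (EuclideanSpace.single j 1) := by
    funext y; rw [fderiv_sub_const]
  rw [this]

lemma bar_contDiff (a : ℝ) :
    ContDiff ℝ (⊤ : ℕ∞) (fun y : EuclideanSpace ℝ (Fin d) => Real.exp (-a * ‖y‖ ^ 2)) :=
  Real.contDiff_exp.comp ((contDiff_norm_sq ℝ).const_smul (-a))

lemma hopf (hd : 0 < d) {lam : ℝ} (hlam : 0 < lam)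
    {v₁ : EuclideanSpace ℝ (Fin d) → ℝ} (hv₁ : ContDiff ℝ (⊤ : ℕ∞) v₁)
    (heig : ∀ x ∈ Metric.ball (0 : EuclideanSpace ℝ (Fin d)) 1,
      -lapR v₁ x = lam * v₁ x)
    (hpos : ∀ x ∈ Metric.ball (0 : EuclideanSpace ℝ (Fin d)) 1, 0 < v₁ x)
    (hbd : ∀ x : EuclideanSpace ℝ (Fin d), ‖x‖ = 1 → v₁ x = 0) :
    ∃ c₀ > 0, ∀ x : EuclideanSpace ℝ (Fin d), 3/4 < ‖x‖ → ‖x‖ < 1 →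
      c₀ * (1 - ‖x‖ ^ 2) ≤ v₁ x := by
  set a : ℝ := (d : ℝ) with ha
  have hapos : 0 < a := by rw [ha]; exact_mod_cast hd
  set h : EuclideanSpace ℝ (Fin d) → ℝ := fun y => Real.exp (-a * ‖y‖ ^ 2) - Real.exp (-a)
    with hh
  have hhc : ContDiff ℝ (⊤ : ℕ∞) h := (bar_contDiff a).sub contDiff_const
  -- min of v₁ on sphere of radius 3/4
  have hx₀ : (EuclideanSpace.single (⟨0, hd⟩ : Fin d) ((3:ℝ)/4)) ∈
      Metric.sphere (0 : EuclideanSpace ℝ (Fin d)) (3/4) := by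
    simp [EuclideanSpace.norm_single, abs_of_nonneg]
  obtain ⟨z, hz, hminz⟩ := (isCompact_sphere (0 : EuclideanSpace ℝ (Fin d)) (3/4)).exists_isMinOn
    ⟨_, hx₀⟩ hv₁.continuous.continuousOn
  have hznorm : ‖z‖ = 3/4 := by simpa [dist_zero_right] using hz
  have hδ₁ : 0 < v₁ z := hpos z (by simp [Metric.mem_ball, dist_zero_right, hznorm]; norm_num)
  set δ₁ := v₁ z with hδ
  -- barrier value at radius 3/4
  set h₀ : ℝ := Real.exp (-a * (9/16)) - Real.exp (-a) with hh₀
  have hh₀pos : 0 < h₀ := by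
    rw [hh₀, sub_pos]
    apply Real.exp_lt_exp.mpr
    nlinarith
  set c : ℝ := δ₁ / h₀ with hc
  have hcpos : 0 < c := div_pos hδ₁ hh₀pos
  set u : EuclideanSpace ℝ (Fin d) → ℝ := fun y => (-c) * h y + v₁ y with hu
  have huc : ContDiff ℝ (⊤ : ℕ∞) u := (hhc.const_smul (-c)).add hv₁
  set U : Set (EuclideanSpace ℝ (Fin d)) := {x | 3/4 < ‖x‖ ∧ ‖x‖ < 1} with hU
  have hUopen : IsOpen U := by
    have : U = (fun x : EuclideanSpace ℝ (Fin d) => ‖x‖) ⁻¹' (Set.Ioo (3/4) 1) := rfl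
    rw [this]
    exact isOpen_Ioo.preimage continuous_norm
  have hUsub : U ⊆ Metric.closedBall 0 1 := fun x hx => by
    simp [Metric.mem_closedBall, dist_zero_right]
    exact le_of_lt hx.2
  have hUclos : closure U ⊆ {x : EuclideanSpace ℝ (Fin d) | 3/4 ≤ ‖x‖ ∧ ‖x‖ ≤ 1} := by
    apply closure_minimal
    · intro x hx; exact ⟨le_of_lt hx.1, le_of_lt hx.2⟩
    · have : {x : EuclideanSpace ℝ (Fin d) | 3/4 ≤ ‖x‖ ∧ ‖x‖ ≤ 1}
          = (fun x : EuclideanSpace ℝ (Fin d) => ‖x‖) ⁻¹' (Set.Icc (3/4) 1) := rfl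
      rw [this]
      exact isClosed_Icc.preimage continuous_norm
  have key : ∀ x ∈ U, 0 ≤ u x := by
    refine min_principle hd huc hUopen hUsub ?_ ?_
    · intro x hx
      have hxball : x ∈ Metric.ball (0 : EuclideanSpace ℝ (Fin d)) 1 := by
        simp [Metric.mem_ball, dist_zero_right]; exact hx.2
      have hlapv : lapR v₁ x = -(lam * v₁ x) := by
        have := heig x hxball; linarith
      have hlaph : lapR h x = Real.exp (-a * ‖x‖ ^ 2) * (4 * a ^ 2 * ‖x‖ ^ 2 - 2 * a * d) := by
        rw [hh, lapR_sub_const, lapR_bar]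
      have hlapu : lapR u x = (-c) * lapR h x + lapR v₁ x := lapR_smul_add hhc hv₁ (-c) x
      have hbarpos : 0 ≤ 4 * a ^ 2 * ‖x‖ ^ 2 - 2 * a * d := by
        have h1 : (3:ℝ)/4 < ‖x‖ := hx.1
        have : (9:ℝ)/16 ≤ ‖x‖ ^ 2 := by nlinarith
        rw [← ha]
        nlinarith
      have hv₁x : 0 < v₁ x := hpos x hxball
      have he : 0 ≤ Real.exp (-a * ‖x‖ ^ 2) := (Real.exp_pos _).le
      rw [hlapu, hlapv, hlaph]
      nlinarith [mul_nonneg he hbarpos, mul_pos hlam hv₁x, hcpos,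
        mul_nonneg (mul_nonneg he hbarpos) hcpos.le]
    · intro x hx
      obtain ⟨hx1, hx2⟩ := hUclos hx.1
      have hxU : x ∉ U := hx.2
      have : ‖x‖ = 3/4 ∨ ‖x‖ = 1 := by
        rcases lt_or_eq_of_le hx1 with h1 | h1
        · rcases lt_or_eq_of_le hx2 with h2 | h2
          · exact absurd ⟨h1, h2⟩ hxU
          · right; exact h2
        · left; exact h1.symm
      rcases this with hr | hr
      · have hhx : h x = h₀ := by simp only [hh, hh₀, hr]; norm_num
        have hv : δ₁ ≤ v₁ x := hminz (by simp [Metric.mem_sphere, dist_zero_right, hr])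
        have : c * h₀ = δ₁ := by
          rw [hc, div_mul_cancel₀]; exact ne_of_gt hh₀pos
        simp only [hu]
        rw [hhx]
        nlinarith
      · have hhx : h x = 0 := by simp only [hh, hr]; norm_num
        have hv : v₁ x = 0 := hbd x hr
        simp only [hu, hhx, hv]
        norm_num
  refine ⟨c * (a * Real.exp (-a)), by positivity, ?_⟩
  intro x h34 h1
  have h2 : 0 ≤ (-c) * h x + v₁ x := key x ⟨h34, h1⟩
  have hsplit : Real.exp (-a * ‖x‖ ^ 2) = Real.exp (-a) * Real.exp (a * (1 - ‖x‖ ^ 2)) := by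
    rw [← Real.exp_add]; ring_nf
  have hexpge : a * (1 - ‖x‖ ^ 2) + 1 ≤ Real.exp (a * (1 - ‖x‖ ^ 2)) :=
    Real.add_one_le_exp _
  have h3 : Real.exp (-a) * (a * (1 - ‖x‖ ^ 2)) ≤ h x := by
    simp only [hh]
    rw [hsplit]
    nlinarith [Real.exp_pos (-a)]
  have h4 : c * (Real.exp (-a) * (a * (1 - ‖x‖ ^ 2))) ≤ c * h x :=
    mul_le_mul_of_nonneg_left h3 hcpos.le
  nlinarith

/-- Given the positive ground state Dirichlet eigenfunction `v₁` of `-Δ` on the unit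
ball with eigenvalue `λ > 0` (extended smoothly), for `ε > 0` small enough and any
cutoff `χ` with `0 ≤ χ ≤ 1`, `χ ≡ 1` on `B(0,1)∖B(0,1-ε)` and `χ ≡ 0` on
`B(0,1-2ε)`, there are `M, β > 0` such that `v₂ = M v₁ + χ·(|x|² - 1)` is positive
on `B(0,1)` and satisfies `-Δv₂ ≤ 2λ v₂ - β` there. -/
theorem stmt_14 (d : ℕ) (hd : 0 < d) (lam : ℝ) (hlam : 0 < lam)
    (v₁ : EuclideanSpace ℝ (Fin d) → ℝ) (hv₁ : ContDiff ℝ (⊤ : ℕ∞) v₁)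
    (heig : ∀ x ∈ Metric.ball (0 : EuclideanSpace ℝ (Fin d)) 1,
      -lapR v₁ x = lam * v₁ x)
    (hpos : ∀ x ∈ Metric.ball (0 : EuclideanSpace ℝ (Fin d)) 1, 0 < v₁ x)
    (hbd : ∀ x : EuclideanSpace ℝ (Fin d), ‖x‖ = 1 → v₁ x = 0) :
    ∃ ε₀ > 0, ∀ ε : ℝ, 0 < ε → ε < ε₀ →
      ∀ χ : EuclideanSpace ℝ (Fin d) → ℝ, ContDiff ℝ (⊤ : ℕ∞) χ →
        (∀ x, 0 ≤ χ x ∧ χ x ≤ 1) →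
        (∀ x : EuclideanSpace ℝ (Fin d), 1 - ε ≤ ‖x‖ → ‖x‖ < 1 → χ x = 1) →
        (∀ x : EuclideanSpace ℝ (Fin d), ‖x‖ ≤ 1 - 2 * ε → χ x = 0) →
        ∃ M > 0, ∃ β > 0, ∀ x ∈ Metric.ball (0 : EuclideanSpace ℝ (Fin d)) 1,
          0 < M * v₁ x + χ x * (‖x‖ ^ 2 - 1) ∧
          -lapR (fun y => M * v₁ y + χ y * (‖y‖ ^ 2 - 1)) x ≤
            2 * lam * (M * v₁ x + χ x * (‖x‖ ^ 2 - 1)) - β := by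
  obtain ⟨c₀, hc₀, hhopf⟩ := hopf hd hlam hv₁ heig hpos hbd
  refine ⟨min (1/8) (d / (4 * lam)), by positivity, ?_⟩
  intro ε hε hεlt χ hχ hχ01 hχ1 hχ0
  have hε8 : ε < 1/8 := lt_of_lt_of_le hεlt (min_le_left _ _)
  have hε4 : 4 * lam * ε < d := by
    have h1 : ε < (d:ℝ) / (4 * lam) := lt_of_lt_of_le hεlt (min_le_right _ _)
    rw [lt_div_iff₀ (by positivity)] at h1
    linarith
  set w : EuclideanSpace ℝ (Fin d) → ℝ := fun y => χ y * (‖y‖ ^ 2 - 1) with hw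
  have hwc : ContDiff ℝ (⊤ : ℕ∞) w := hχ.mul ((contDiff_norm_sq ℝ).sub contDiff_const)
  -- compact bound on the middle region
  set K := Metric.closedBall (0 : EuclideanSpace ℝ (Fin d)) (1 - ε) with hK
  have hKc : IsCompact K := isCompact_closedBall _ _
  have hGc : Continuous (fun y => -(2 * lam * w y + lapR w y)) := by
    exact ((continuous_const.mul hwc.continuous).add (lapR_continuous hwc)).neg
  obtain ⟨C, hC⟩ := hKc.exists_bound_of_continuousOn hGc.continuousOn
  set C' := max C 0 with hC'
  have hC'0 : 0 ≤ C' := le_max_right _ _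
  have hCbd : ∀ y ∈ K, -(2 * lam * w y + lapR w y) ≤ C' := by
    intro y hy
    calc -(2 * lam * w y + lapR w y) ≤ ‖-(2 * lam * w y + lapR w y)‖ := le_abs_self _
    _ ≤ C := hC y hy
    _ ≤ C' := le_max_left _ _
  -- min of v₁ on K
  have hKne : K.Nonempty := ⟨0, by simp [hK, Metric.mem_closedBall]; linarith⟩
  obtain ⟨z, hzK, hminz⟩ := hKc.exists_isMinOn hKne hv₁.continuous.continuousOn
  have hzb : z ∈ Metric.ball (0 : EuclideanSpace ℝ (Fin d)) 1 := by
    have := Metric.mem_closedBall.mp hzK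
    rw [Metric.mem_ball]
    linarith
  set δ := v₁ z with hδ
  have hδpos : 0 < δ := hpos z hzb
  set M : ℝ := 1 / c₀ + ((d : ℝ) + C') / (lam * δ) + 1 with hM
  have hMpos : 0 < M := by positivity
  have hMc₀ : 1 + c₀ ≤ M * c₀ := by
    rw [hM, add_mul, add_mul, one_div, inv_mul_cancel₀ hc₀.ne']
    nlinarith [mul_nonneg (show (0:ℝ) ≤ ((d : ℝ) + C') / (lam * δ) by positivity) hc₀.le]
  have hMδ : (d : ℝ) + C' ≤ lam * M * δ := by
    have h1 : (((d : ℝ) + C') / (lam * δ)) * (lam * δ) = (d : ℝ) + C' := by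
      field_simp
    have h2 : (((d : ℝ) + C') / (lam * δ)) ≤ M := by
      rw [hM]
      have : 0 ≤ 1 / c₀ := by positivity
      linarith
    calc (d : ℝ) + C' = (((d : ℝ) + C') / (lam * δ)) * (lam * δ) := h1.symm
    _ ≤ M * (lam * δ) := mul_le_mul_of_nonneg_right h2 (by positivity)
    _ = lam * M * δ := by ring
  refine ⟨M, hMpos, (d : ℝ), by exact_mod_cast hd, ?_⟩
  intro x hxb
  have hxn : ‖x‖ < 1 := by rwa [Metric.mem_ball, dist_zero_right] at hxb
  have hxnn : (0:ℝ) ≤ ‖x‖ := norm_nonneg x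
  constructor
  · -- positivity
    rcases le_or_gt ‖x‖ (1 - 2 * ε) with hcase | hcase
    · rw [hχ0 x hcase]
      have := hpos x hxb
      nlinarith
    · have h34 : 3/4 < ‖x‖ := by linarith
      have hhop := hhopf x h34 hxn
      obtain ⟨hχa, hχb⟩ := hχ01 x
      have hr2 : ‖x‖ ^ 2 < 1 := by nlinarith
      have hkey : χ x * (1 - ‖x‖ ^ 2) ≤ 1 * (1 - ‖x‖ ^ 2) :=
        mul_le_mul_of_nonneg_right hχb (by linarith)
      nlinarith [mul_le_mul_of_nonneg_left hhop hMpos.le]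
  · -- PDE inequality
    rcases le_or_gt ‖x‖ (1 - ε) with hcase | hcase
    · -- middle/inner region
      have hxK : x ∈ K := by rw [hK, Metric.mem_closedBall, dist_zero_right]; exact hcase
      have hlap : lapR (fun y => M * v₁ y + χ y * (‖y‖ ^ 2 - 1)) x
          = M * lapR v₁ x + lapR w x := lapR_smul_add hv₁ hwc M x
      have heigx : lapR v₁ x = -(lam * v₁ x) := by have := heig x hxb; linarith
      have hvx : δ ≤ v₁ x := hminz hxK
      have hG := hCbd x hxK
      have hMv : lam * M * δ ≤ lam * M * v₁ x :=
        mul_le_mul_of_nonneg_left hvx (by positivity)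
      rw [hlap, heigx]
      have hwx : w x = χ x * (‖x‖ ^ 2 - 1) := rfl
      rw [← hwx]
      linarith
    · -- outer region: χ ≡ 1 near x
      set V : Set (EuclideanSpace ℝ (Fin d)) := {y | 1 - ε < ‖y‖ ∧ ‖y‖ < 1} with hV
      have hVopen : IsOpen V := by
        have : V = (fun y : EuclideanSpace ℝ (Fin d) => ‖y‖) ⁻¹' (Set.Ioo (1-ε) 1) := rfl
        rw [this]; exact isOpen_Ioo.preimage continuous_norm
      have hxV : x ∈ V := ⟨hcase, hxn⟩
      have heq : (fun y => M * v₁ y + χ y * (‖y‖ ^ 2 - 1))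
          =ᶠ[nhds x] (fun y => M * v₁ y + (‖y‖ ^ 2 - 1)) := by
        filter_upwards [hVopen.mem_nhds hxV] with y hy
        rw [hχ1 y hy.1.le hy.2, one_mul]
      have hlap : lapR (fun y => M * v₁ y + χ y * (‖y‖ ^ 2 - 1)) x
          = M * lapR v₁ x + 2 * d := by
        rw [lapR_congr heq,
          lapR_smul_add hv₁ ((contDiff_norm_sq ℝ).sub contDiff_const) M x,
          lapR_sub_const, lapR_normsq]
      have heigx : lapR v₁ x = -(lam * v₁ x) := by have := heig x hxb; linarith
      have hχx : χ x = 1 := hχ1 x hcase.le hxn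
      have hvx : 0 < v₁ x := hpos x hxb
      have hr2 : 1 - 2 * ε < ‖x‖ ^ 2 := by nlinarith
      rw [hlap, heigx, hχx]
      have h5 : 2 * lam * (1 - 2 * ε) < 2 * lam * ‖x‖ ^ 2 :=
        mul_lt_mul_of_pos_left hr2 (by positivity)
      have h6 : 0 < lam * (M * v₁ x) := mul_pos hlam (mul_pos hMpos hvx)
      linarith
end
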